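/- Let φ be an Orlicz function such that ∑_{n=n₁}^∞ φ(1/n) < ∞ for some n₁ ∈ ℕ. Then A_φ is a closed subset of ces_φ with respect to the Luxemburg norm: if x_m ∈ A_φ for all m and x ∈ ces_φ satisfies ‖x_m − x‖_φ → 0, then x ∈ A_φ. -/

import Mathlib

open scoped ENNReal
open Filter

/-- An Orlicz function: `φ : ℝ → [0,∞]` even, convex, left continuous on `ℝ₊`,
continuous at zero, with `φ 0 = 0` and `φ u → ∞` as `u → ∞`. -/
structure OrliczFunction where
  toFun : ℝ → ℝ≥0∞
  even' : ∀ u : ℝ, toFun (-u) = toFun u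
  convex' : ∀ u v t : ℝ, 0 ≤ t → t ≤ 1 →
    toFun (t * u + (1 - t) * v) ≤ ENNReal.ofReal t * toFun u + ENNReal.ofReal (1 - t) * toFun v
  map_zero' : toFun 0 = 0
  leftContinuous' : ∀ t : ℝ, 0 < t → Tendsto toFun (nhdsWithin t (Set.Iio t)) (nhds (toFun t))
  continuousAtZero' : Tendsto toFun (nhds 0) (nhds 0)
  tendsto_top' : Tendsto toFun atTop (nhds ⊤)

/-- The Cesàro mean `σx(n) = (1/n) ∑_{j=1}^n |x j|` (with `0`-based indexing). -/
noncomputable def cesaroMean (x : ℕ → ℝ) (n : ℕ) : ℝ :=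
  (∑ j ∈ Finset.range (n + 1), |x j|) / (n + 1)

/-- The modular `ρ_φ(x) = ∑_i φ(σx(i))`. -/
noncomputable def rho (φ : OrliczFunction) (x : ℕ → ℝ) : ℝ≥0∞ :=
  ∑' n : ℕ, φ.toFun (cesaroMean x n)

/-- The Cesàro–Orlicz sequence space `ces_φ`. -/
def cesOrlicz (φ : OrliczFunction) : Set (ℕ → ℝ) :=
  {x | ∃ lam : ℝ, 0 < lam ∧ rho φ (fun i => lam * x i) < ⊤}

/-- The Luxemburg norm `‖x‖_φ = inf {λ > 0 : ρ_φ(x/λ) ≤ 1}`. -/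
noncomputable def luxNorm (φ : OrliczFunction) (x : ℕ → ℝ) : ℝ :=
  sInf {lam : ℝ | 0 < lam ∧ rho φ (fun i => x i / lam) ≤ 1}

/-- The subspace `A_φ` of `ces_φ`. -/
def Aphi (φ : OrliczFunction) : Set (ℕ → ℝ) :=
  {x | x ∈ cesOrlicz φ ∧ ∀ k : ℝ, 0 < k → ∃ nk : ℕ,
    ∑' n : ℕ, φ.toFun ((k / ((nk + n + 1 : ℕ) : ℝ)) * ∑ i ∈ Finset.range (nk + n + 1), |x i|) < ⊤}

/-- `∃ n₁, ∑_{n=n₁}^∞ φ(1/n) < ∞`. -/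
def TailFinite (φ : OrliczFunction) : Prop :=
  ∃ n₁ : ℕ, ∑' n : ℕ, φ.toFun (((n₁ + n + 1 : ℕ) : ℝ)⁻¹) < ⊤

/-- The `Δ₂`-condition at zero. -/
def Delta2Zero (φ : OrliczFunction) : Prop :=
  ∃ K : ℝ, 0 < K ∧ ∃ a : ℝ, 0 < a ∧ 0 < φ.toFun a ∧
    ∀ u : ℝ, 0 ≤ u → u ≤ a → φ.toFun (2 * u) ≤ ENNReal.ofReal K * φ.toFun u

/-- `φ` takes only finite values. -/
def FiniteValued (φ : OrliczFunction) : Prop := ∀ u : ℝ, φ.toFun u ≠ ⊤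

/-!
If `‖x_m - x‖_φ < 1/(2k)`, there is `λ < 1/(2k)` with `ρ_φ((x_m - x)/λ) ≤ 1`. Since
`σx ≤ σx_m + σ(x_m - x)` and `φ(a + b) ≤ φ(2a) + φ(2b)`, each tail term `φ(k σx(n))` is bounded by
`φ(2k σx_m(n)) + φ(σ((x_m - x)/λ)(n))`. The first sum has a finite tail because `x_m ∈ A_φ`, and
the second is at most `ρ_φ((x_m - x)/λ) ≤ 1`.
-/

namespace OrliczFunction

variable (φ : OrliczFunction)

lemma map_mul_le {t : ℝ} (ht₀ : 0 ≤ t) (ht₁ : t ≤ 1) (u : ℝ) :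
    φ.toFun (t * u) ≤ ENNReal.ofReal t * φ.toFun u := by
  simpa [φ.map_zero'] using φ.convex' u 0 t ht₀ ht₁

lemma map_le_map {u v : ℝ} (hu : 0 ≤ u) (huv : u ≤ v) : φ.toFun u ≤ φ.toFun v := by
  rcases hu.eq_or_lt with rfl | hu₀
  · rw [φ.map_zero']; exact zero_le
  have hv : 0 < v := hu₀.trans_le huv
  have ht₁ : u / v ≤ 1 := (div_le_one hv).2 huv
  calc φ.toFun u = φ.toFun (u / v * v) := by rw [div_mul_cancel₀ _ hv.ne']
    _ ≤ ENNReal.ofReal (u / v) * φ.toFun v := φ.map_mul_le (by positivity) ht₁ v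
    _ ≤ φ.toFun v := mul_le_of_le_one_left' (ENNReal.ofReal_le_one.2 ht₁)

lemma map_add_le (a b : ℝ) : φ.toFun (a + b) ≤ φ.toFun (2 * a) + φ.toFun (2 * b) := by
  have h := φ.convex' (2 * a) (2 * b) (1 / 2) (by norm_num) (by norm_num)
  rw [show (1 / 2 : ℝ) * (2 * a) + (1 - 1 / 2) * (2 * b) = a + b by ring] at h
  refine h.trans (add_le_add ?_ ?_) <;>
    exact mul_le_of_le_one_left' (ENNReal.ofReal_le_one.2 (by norm_num))

lemma map_le_of_le_add {u a b : ℝ} (hu : 0 ≤ u) (h : u ≤ a + b) :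
    φ.toFun u ≤ φ.toFun (2 * a) + φ.toFun (2 * b) :=
  (φ.map_le_map hu h).trans (φ.map_add_le a b)

end OrliczFunction

lemma cesaroMean_nonneg (x : ℕ → ℝ) (n : ℕ) : 0 ≤ cesaroMean x n := by
  unfold cesaroMean
  positivity

lemma cesaroMean_const_mul {c : ℝ} (hc : 0 ≤ c) (x : ℕ → ℝ) (n : ℕ) :
    cesaroMean (fun i => c * x i) n = c * cesaroMean x n := by
  simp only [cesaroMean, abs_mul, abs_of_nonneg hc, ← Finset.mul_sum, mul_div_assoc]

lemma cesaroMean_div_const {c : ℝ} (hc : 0 ≤ c) (x : ℕ → ℝ) (n : ℕ) :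
    cesaroMean (fun i => x i / c) n = cesaroMean x n / c := by
  simp only [div_eq_inv_mul, cesaroMean_const_mul (inv_nonneg.2 hc)]

lemma cesaroMean_sub_le (x y : ℕ → ℝ) (n : ℕ) :
    cesaroMean (fun i => x i - y i) n ≤ cesaroMean x n + cesaroMean y n := by
  unfold cesaroMean
  rw [← add_div, ← Finset.sum_add_distrib]
  gcongr
  exact abs_sub _ _

section Modular

variable (φ : OrliczFunction)

lemma rho_const_mul_le {t : ℝ} (ht₀ : 0 ≤ t) (ht₁ : t ≤ 1) (x : ℕ → ℝ) :
    rho φ (fun i => t * x i) ≤ ENNReal.ofReal t * rho φ x := by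
  rw [rho, rho, ← ENNReal.tsum_mul_left]
  refine ENNReal.tsum_le_tsum fun n => ?_
  rw [cesaroMean_const_mul ht₀]
  exact φ.map_mul_le ht₀ ht₁ _

lemma rho_const_mul_mono {a b : ℝ} (ha : 0 ≤ a) (hab : a ≤ b) (x : ℕ → ℝ) :
    rho φ (fun i => a * x i) ≤ rho φ (fun i => b * x i) := by
  refine ENNReal.tsum_le_tsum fun n => ?_
  rw [cesaroMean_const_mul ha, cesaroMean_const_mul (ha.trans hab)]
  have hσ := cesaroMean_nonneg x n
  exact φ.map_le_map (by positivity) (by gcongr)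

lemma rho_const_mul_sub_le {c : ℝ} (hc : 0 ≤ c) (x y : ℕ → ℝ) :
    rho φ (fun i => c * (x i - y i)) ≤
      rho φ (fun i => (2 * c) * x i) + rho φ (fun i => (2 * c) * y i) := by
  rw [rho, rho, rho, ← ENNReal.tsum_add]
  refine ENNReal.tsum_le_tsum fun n => ?_
  have h2c : 0 ≤ 2 * c := by positivity
  rw [cesaroMean_const_mul hc, cesaroMean_const_mul h2c, cesaroMean_const_mul h2c, mul_assoc,
    mul_assoc]
  have hsub := cesaroMean_sub_le x y n
  exact φ.map_le_of_le_add (mul_nonneg hc (cesaroMean_nonneg _ n)) (by nlinarith)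

lemma sub_mem_cesOrlicz {x y : ℕ → ℝ} (hx : x ∈ cesOrlicz φ) (hy : y ∈ cesOrlicz φ) :
    (fun i => x i - y i) ∈ cesOrlicz φ := by
  obtain ⟨a, ha, hxa⟩ := hx
  obtain ⟨b, hb, hyb⟩ := hy
  refine ⟨min a b / 2, by positivity, (rho_const_mul_sub_le φ (by positivity) x y).trans_lt ?_⟩
  have h2 : 2 * (min a b / 2) = min a b := by ring
  rw [h2]
  exact ENNReal.add_lt_top.2
    ⟨(rho_const_mul_mono φ (by positivity) (min_le_left a b) x).trans_lt hxa,
     (rho_const_mul_mono φ (by positivity) (min_le_right a b) y).trans_lt hyb⟩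

/-- Scaling `μ z` down by `r ≥ max 1 ρ_φ(μ z)` brings the modular below `1`, by convexity. -/
lemma exists_rho_div_le_one {z : ℕ → ℝ} (hz : z ∈ cesOrlicz φ) :
    ∃ lam : ℝ, 0 < lam ∧ rho φ (fun i => z i / lam) ≤ 1 := by
  obtain ⟨μ, hμ, hfin⟩ := hz
  set r := max 1 (rho φ (fun i => μ * z i)).toReal
  have hr₁ : 1 ≤ r := le_max_left _ _
  have hr₀ : 0 < r := zero_lt_one.trans_le hr₁
  refine ⟨r / μ, by positivity, ?_⟩
  have hscale : (fun i => z i / (r / μ)) = fun i => r⁻¹ * (μ * z i) := by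
    funext i
    field_simp
  calc rho φ (fun i => z i / (r / μ))
      ≤ ENNReal.ofReal r⁻¹ * rho φ (fun i => μ * z i) := by
        rw [hscale]; exact rho_const_mul_le φ (by positivity) (inv_le_one_of_one_le₀ hr₁) _
    _ ≤ ENNReal.ofReal r⁻¹ * ENNReal.ofReal r := by
        gcongr
        rw [← ENNReal.ofReal_toReal hfin.ne]
        exact ENNReal.ofReal_le_ofReal (le_max_right _ _)
    _ = 1 := by
        rw [← ENNReal.ofReal_mul (by positivity), inv_mul_cancel₀ hr₀.ne', ENNReal.ofReal_one]

lemma exists_rho_div_le_one_of_luxNorm_lt {z : ℕ → ℝ} (hz : z ∈ cesOrlicz φ) {ε : ℝ}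
    (hε : luxNorm φ z < ε) : ∃ lam : ℝ, 0 < lam ∧ lam < ε ∧ rho φ (fun i => z i / lam) ≤ 1 := by
  obtain ⟨lam, ⟨hlam, hρ⟩, hlt⟩ :=
    (csInf_lt_iff ⟨0, fun _ h => h.1.le⟩ (exists_rho_div_le_one φ hz)).1 hε
  exact ⟨lam, hlam, hlt, hρ⟩

end Modular

section Tail

variable (φ : OrliczFunction)

noncomputable def cesaroTail (x : ℕ → ℝ) (k : ℝ) (nk : ℕ) : ℝ≥0∞ :=
  ∑' n : ℕ, φ.toFun (k * cesaroMean x (nk + n))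

lemma mem_Aphi_iff {x : ℕ → ℝ} :
    x ∈ Aphi φ ↔ x ∈ cesOrlicz φ ∧ ∀ k : ℝ, 0 < k → ∃ nk : ℕ, cesaroTail φ x k nk < ⊤ := by
  have hterm : ∀ (k : ℝ) (p : ℕ),
      k / ((p + 1 : ℕ) : ℝ) * ∑ i ∈ Finset.range (p + 1), |x i| = k * cesaroMean x p := by
    intro k p
    rw [cesaroMean, Nat.cast_succ]
    ring
  simp only [Aphi, cesaroTail, Set.mem_ofPred_eq, ← hterm]

lemma cesaroTail_le_rho (x : ℕ → ℝ) (nk : ℕ) : cesaroTail φ x 1 nk ≤ rho φ x := by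
  simp only [cesaroTail, one_mul, rho]
  exact ENNReal.tsum_comp_le_tsum_of_injective (add_right_injective nk) _

lemma cesaroTail_le_add {x y : ℕ → ℝ} {k lam : ℝ} (hk : 0 ≤ k) (hlam : 0 < lam)
    (hklam : 2 * k * lam ≤ 1) (nk : ℕ) :
    cesaroTail φ x k nk ≤
      cesaroTail φ y (2 * k) nk + cesaroTail φ (fun i => (y i - x i) / lam) 1 nk := by
  rw [cesaroTail, cesaroTail, cesaroTail, ← ENNReal.tsum_add]
  refine ENNReal.tsum_le_tsum fun n => ?_
  set p := nk + n
  set d : ℕ → ℝ := fun i => y i - x i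
  have htri : cesaroMean x p ≤ cesaroMean y p + cesaroMean d p := by
    have hx : x = fun i => y i - d i := by funext i; simp only [d]; ring
    conv_lhs => rw [hx]
    exact cesaroMean_sub_le _ _ p
  have hd := cesaroMean_nonneg d p
  have hscale : 2 * k * cesaroMean d p ≤ cesaroMean d p / lam := by
    rw [le_div_iff₀ hlam]
    nlinarith
  refine (φ.map_le_of_le_add (mul_nonneg hk (cesaroMean_nonneg x p))
    (by nlinarith : k * cesaroMean x p ≤ k * cesaroMean y p + k * cesaroMean d p)).trans ?_
  rw [← mul_assoc, ← mul_assoc, one_mul, cesaroMean_div_const hlam.le]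
  gcongr
  exact φ.map_le_map (by positivity) hscale

end Tail

theorem stmt_4_general (φ : OrliczFunction)
    (x : ℕ → ℝ) (hx : x ∈ cesOrlicz φ) (xs : ℕ → ℕ → ℝ)
    (hmem : ∀ m, xs m ∈ Aphi φ)
    (hconv : Tendsto (fun m => luxNorm φ (fun i => xs m i - x i)) atTop (nhds 0)) :
    x ∈ Aphi φ := by
  refine (mem_Aphi_iff φ).2 ⟨hx, fun k hk => ?_⟩
  obtain ⟨m, hm⟩ := (hconv.eventually (gt_mem_nhds (by positivity : (0 : ℝ) < 1 / (2 * k)))).exists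
  obtain ⟨hmces, hmtail⟩ := (mem_Aphi_iff φ).1 (hmem m)
  obtain ⟨lam, hlam, hlamk, hρ⟩ :=
    exists_rho_div_le_one_of_luxNorm_lt φ (sub_mem_cesOrlicz φ hmces hx) hm
  have hklam : 2 * k * lam ≤ 1 := by
    rw [lt_div_iff₀ (by positivity)] at hlamk
    linarith
  obtain ⟨nk, hnk⟩ := hmtail (2 * k) (by positivity)
  refine ⟨nk, (cesaroTail_le_add φ hk.le hlam hklam nk).trans_lt (ENNReal.add_lt_top.2 ⟨hnk, ?_⟩)⟩
  exact ((cesaroTail_le_rho φ _ nk).trans hρ).trans_lt ENNReal.one_lt_top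

/-- `A_φ` is closed in `ces_φ` with respect to the Luxemburg norm. -/
theorem stmt_4 (φ : OrliczFunction) (htail : TailFinite φ)
    (x : ℕ → ℝ) (hx : x ∈ cesOrlicz φ) (xs : ℕ → ℕ → ℝ)
    (hmem : ∀ m, xs m ∈ Aphi φ)
    (hconv : Tendsto (fun m => luxNorm φ (fun i => xs m i - x i)) atTop (nhds 0)) :
    x ∈ Aphi φ :=
  stmt_4_general φ x hx xs hmem hconv
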